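/- Let a1 > 1, a2 > 1 and let θ_1, …, θ_k be distributed according to the multiplicative inverse gamma prior with parameters (a1, a2). Then E(θ_h) = 1 / ((a1 − 1) · (a2 − 1)^{h−1}) for every h ∈ {1, …, k}. Consequently, if in addition 1 < a2 < 2, both the sequence E(θ_h) and the sequence a1 · a2^{h−1} (the expectation of the corresponding multiplicative gamma variables τ_h = 1/θ_h) are strictly increasing in h. -/

import Mathlib

open MeasureTheory ProbabilityTheory Real Filter Set

open MeasureTheory ProbabilityTheory Real Filter Set

/-- Density of the inverse gamma distribution `Inv-Ga(a, b)`: equal to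
`b^a / Γ(a) · x^{-(a+1)} · e^{-b/x}` for `x > 0` and `0` otherwise. -/
noncomputable def invGammaPDF (a b : ℝ) (x : ℝ) : ℝ :=
  if 0 < x then b ^ a / Real.Gamma a * x ^ (-(a + 1)) * Real.exp (-b / x) else 0

/-- The inverse gamma distribution `Inv-Ga(a, b)` as a measure on `ℝ`. -/
noncomputable def invGammaMeasure (a b : ℝ) : Measure ℝ :=
  MeasureTheory.volume.withDensity (fun x => ENNReal.ofReal (invGammaPDF a b x))

/-!
The mean of `Inv-Ga(a, b)` is `b / (a - 1)`: substituting `y = 1 / x` turns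
`∫ x · x^{-(a+1)} e^{-b/x} dx` into the Gamma integral `∫ y^{a-2} e^{-by} dy = Γ(a - 1) / b^{a-1}`,
and `Γ(a) = (a - 1) Γ(a - 1)`. By independence the mean of `θ_h = ϑ_1 ⋯ ϑ_h` is the product of
the means, `1 / ((a1 - 1)(a2 - 1)^{h-1})`, which increases in `h` exactly when `a2 - 1 < 1`.
-/

theorem integral_Ioi_rpow_neg_mul_exp_neg_div {a b : ℝ} (ha : 1 < a) (hb : 0 < b) :
    ∫ x in Ioi 0, x ^ (-a) * exp (-b / x) = (1 / b) ^ (a - 1) * Gamma (a - 1) := by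
  rw [← integral_rpow_mul_exp_neg_mul_Ioi (by linarith) hb,
    ← integral_comp_rpow_Ioi _ (by norm_num : (-1 : ℝ) ≠ 0)]
  refine setIntegral_congr_fun measurableSet_Ioi fun x (hx : 0 < x) ↦ ?_
  simp only [smul_eq_mul, abs_neg, abs_one, one_mul, rpow_neg_one, div_inv_eq_mul]
  rw [inv_rpow hx.le, ← rpow_neg hx.le, neg_neg, ← mul_assoc, ← rpow_add hx]
  congr 2 <;> ring

theorem invGammaPDF_nonneg {a b : ℝ} (ha : 0 < a) (hb : 0 ≤ b) (x : ℝ) :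
    0 ≤ invGammaPDF a b x := by
  unfold invGammaPDF
  split_ifs with hx
  · have := Gamma_pos_of_pos ha
    positivity
  · exact le_rfl

@[fun_prop]
theorem measurable_invGammaPDF (a b : ℝ) : Measurable (invGammaPDF a b) :=
  Measurable.ite measurableSet_Ioi (by fun_prop) measurable_const

theorem integral_id_invGammaMeasure {a b : ℝ} (ha : 1 < a) (hb : 0 < b) :
    ∫ x, x ∂invGammaMeasure a b = b / (a - 1) := by
  have hpdf : ∀ x, invGammaPDF a b x * x
      = (Ioi 0).indicator (fun x ↦ b ^ a / Gamma a * (x ^ (-a) * exp (-b / x))) x := by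
    intro x
    by_cases hx : 0 < x
    · simp only [invGammaPDF, if_pos hx, indicator_of_mem (show x ∈ Ioi 0 from hx)]
      have hpow : x ^ (-(a + 1)) * x = x ^ (-a) := by
        rw [rpow_neg hx.le, rpow_neg hx.le, rpow_add_one hx.ne']; field_simp
      rw [← hpow]; ring
    · simp [invGammaPDF, hx, show x ∉ Ioi 0 from hx]
  have hΓ : Gamma a = (a - 1) * Gamma (a - 1) := by
    simpa using Gamma_add_one (s := a - 1) (by linarith)
  have hbpow : b ^ a * (1 / b) ^ (a - 1) = b := by
    rw [one_div, inv_rpow hb.le, rpow_sub_one hb.ne']; field_simp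
  rw [invGammaMeasure, integral_withDensity_eq_integral_toReal_smul (by fun_prop)
    (ae_of_all _ fun _ ↦ ENNReal.ofReal_lt_top)]
  simp only [ENNReal.toReal_ofReal (invGammaPDF_nonneg (by linarith : 0 < a) hb.le _),
    smul_eq_mul, hpdf]
  rw [integral_indicator measurableSet_Ioi, integral_const_mul,
    integral_Ioi_rpow_neg_mul_exp_neg_div ha hb, hΓ]
  have hΓpos : 0 < Gamma (a - 1) := Gamma_pos_of_pos (by linarith)
  have ha_sub : a - 1 ≠ 0 := by linarith
  calc _ = b ^ a * (1 / b) ^ (a - 1) / (a - 1) := by field_simp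
    _ = b / (a - 1) := by rw [hbpow]

theorem ProbabilityTheory.iIndepFun.integral_finset_prod_eq_prod_integral
    {Ω ι 𝕜 : Type*} [RCLike 𝕜] [MeasurableSpace Ω] {μ : Measure Ω} {X : ι → Ω → 𝕜} (hX : iIndepFun X μ)
    (mX : ∀ i, AEStronglyMeasurable (X i) μ) (s : Finset ι) :
    ∫ ω, ∏ i ∈ s, X i ω ∂μ = ∏ i ∈ s, ∫ ω, X i ω ∂μ := by
  simp_rw [← Finset.prod_coe_sort s]
  exact (hX.precomp Subtype.val_injective).integral_fun_prod_eq_prod_integral fun i ↦ mX i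

theorem multiplicative_inverse_gamma_expectation_general
    {Ω : Type*} [MeasureSpace Ω]
    (a1 a2 : ℝ) (ha1 : 1 < a1) (ha2 : 1 < a2)
    (k : ℕ) (ϑ : ℕ → Ω → ℝ)
    (hmeas : ∀ l, Measurable (ϑ l))
    (hindep : iIndepFun (m := fun _ => Real.measurableSpace) ϑ ℙ)
    (hlaw1 : Measure.map (ϑ 0) ℙ = invGammaMeasure a1 1)
    (hlaw2 : ∀ l, 1 ≤ l → Measure.map (ϑ l) ℙ = invGammaMeasure a2 1) :
    (∀ h, 1 ≤ h → h ≤ k →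
      ∫ ω, ∏ l ∈ Finset.range h, ϑ l ω ∂ℙ = 1 / ((a1 - 1) * (a2 - 1) ^ (h - 1))) ∧
    (a2 < 2 → ∀ h, 1 ≤ h → h ≤ k - 1 →
      (∫ ω, ∏ l ∈ Finset.range h, ϑ l ω ∂ℙ) <
        (∫ ω, ∏ l ∈ Finset.range (h + 1), ϑ l ω ∂ℙ) ∧
      a1 * a2 ^ (h - 1) < a1 * a2 ^ h) := by
  have hmean {l : ℕ} {a : ℝ} (ha : 1 < a) (hlaw : Measure.map (ϑ l) ℙ = invGammaMeasure a 1) :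
      ∫ ω, ϑ l ω ∂ℙ = 1 / (a - 1) := by
    rw [← integral_map (f := fun x ↦ x) (hmeas l).aemeasurable aestronglyMeasurable_id, hlaw,
      integral_id_invGammaMeasure ha one_pos]
  have hprod (n : ℕ) :
      ∫ ω, ∏ l ∈ Finset.range (n + 1), ϑ l ω ∂ℙ = 1 / ((a1 - 1) * (a2 - 1) ^ n) := by
    rw [hindep.integral_finset_prod_eq_prod_integral (fun l ↦ (hmeas l).aestronglyMeasurable),
      Finset.prod_range_succ', hmean ha1 hlaw1,
      Finset.prod_congr rfl fun l _ ↦ hmean ha2 (hlaw2 (l + 1) l.succ_pos),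
      Finset.prod_const, Finset.card_range, one_div_pow, one_div_mul_one_div, mul_comm]
  refine ⟨fun h hh _ ↦ ?_, fun ha2' h hh _ ↦ ?_⟩ <;> obtain ⟨n, rfl⟩ := Nat.exists_eq_add_of_le' hh
  · exact hprod n
  rw [hprod, hprod, Nat.add_sub_cancel]
  refine ⟨one_div_lt_one_div_of_lt (by positivity) ?_, ?_⟩
  · exact mul_lt_mul_of_pos_left (pow_lt_pow_right_of_lt_one₀ (by linarith) (by linarith)
      n.lt_succ_self) (by linarith)
  · exact mul_lt_mul_of_pos_left (pow_lt_pow_right₀ ha2 n.lt_succ_self) (by linarith)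

/-- expectations of the multiplicative inverse gamma prior:
`E(θ_h) = 1/((a1-1)(a2-1)^{h-1})` for `a1, a2 > 1`; moreover if `1 < a2 < 2` then both
`E(θ_h)` and `a1 · a2^{h-1}` strictly increase in `h`. -/
theorem multiplicative_inverse_gamma_expectation
    {Ω : Type*} [MeasureSpace Ω] [IsProbabilityMeasure (ℙ : Measure Ω)]
    (a1 a2 : ℝ) (ha1 : 1 < a1) (ha2 : 1 < a2)
    (k : ℕ) (ϑ : ℕ → Ω → ℝ)
    (hmeas : ∀ l, Measurable (ϑ l))
    (hindep : iIndepFun (m := fun _ => Real.measurableSpace) ϑ ℙ)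
    (hlaw1 : Measure.map (ϑ 0) ℙ = invGammaMeasure a1 1)
    (hlaw2 : ∀ l, 1 ≤ l → Measure.map (ϑ l) ℙ = invGammaMeasure a2 1) :
    (∀ h, 1 ≤ h → h ≤ k →
      ∫ ω, ∏ l ∈ Finset.range h, ϑ l ω ∂ℙ = 1 / ((a1 - 1) * (a2 - 1) ^ (h - 1))) ∧
    (a2 < 2 → ∀ h, 1 ≤ h → h ≤ k - 1 →
      (∫ ω, ∏ l ∈ Finset.range h, ϑ l ω ∂ℙ) <
        (∫ ω, ∏ l ∈ Finset.range (h + 1), ϑ l ω ∂ℙ) ∧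
      a1 * a2 ^ (h - 1) < a1 * a2 ^ h) :=
  multiplicative_inverse_gamma_expectation_general a1 a2 ha1 ha2 k ϑ hmeas hindep hlaw1 hlaw2
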